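/- The cube [0,1]ⁿ is positively invariant under the flow of the ODE u_i' = A_i(u)(1-u_i)/(J_i^A+1-u_i) - I_i(u) u_i/(J_i^I+u_i), provided A_i and I_i are nonnegative Lipschitz functions on ℝⁿ and J_i^A, J_i^I > 0: any solution with u(0) ∈ [0,1]ⁿ satisfies u(t) ∈ [0,1]ⁿ for all t ≥ 0 in its interval of existence. -/
import Mathlib

/-- No-escape lemma: if `f 0 ≤ c` and `f' t ≤ 0` whenever `f t ∈ (c, c + η)`,
then `f t ≤ c` on `[0, T]`. -/
lemma no_escape {f f' : ℝ → ℝ} {T c η : ℝ} (hη : 0 < η)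
    (hd : ∀ t ∈ Set.Icc (0 : ℝ) T, HasDerivAt f (f' t) t)
    (h0 : f 0 ≤ c)
    (hneg : ∀ t ∈ Set.Icc (0 : ℝ) T, c < f t → f t < c + η → f' t ≤ 0) :
    ∀ t ∈ Set.Icc (0 : ℝ) T, f t ≤ c := by
  by_contra hcon
  push_neg at hcon
  obtain ⟨t0, ht0, ht0c⟩ := hcon
  have hcontOn : ContinuousOn f (Set.Icc 0 T) := fun x hx =>
    ((hd x hx).continuousAt).continuousWithinAt
  set S : Set ℝ := {s | s ∈ Set.Icc (0 : ℝ) t0 ∧ f s ≤ c} with hS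
  have hsub : Set.Icc (0 : ℝ) t0 ⊆ Set.Icc (0 : ℝ) T :=
    Set.Icc_subset_Icc le_rfl ht0.2
  have hSne : S.Nonempty := ⟨0, ⟨le_rfl, ht0.1⟩, h0⟩
  have hSbdd : BddAbove S := ⟨t0, fun x hx => hx.1.2⟩
  have hSclosed : IsClosed S := by
    have : S = Set.Icc (0 : ℝ) t0 ∩ f ⁻¹' Set.Iic c := by
      ext x
      simp only [hS, Set.mem_setOf_eq, Set.mem_inter_iff, Set.mem_preimage, Set.mem_Iic]
    rw [this]
    exact (hcontOn.mono hsub).preimage_isClosed_of_isClosed isClosed_Icc isClosed_Iic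
  set s := sSup S with hs
  have hsmem : s ∈ S := hSclosed.csSup_mem hSne hSbdd
  have hsIcc : s ∈ Set.Icc (0 : ℝ) t0 := hsmem.1
  have hfs : f s ≤ c := hsmem.2
  have hst0 : s < t0 := lt_of_le_of_ne hsIcc.2 fun h => absurd hfs (not_le.mpr (h ▸ ht0c))
  have hgt : ∀ r, s < r → r ≤ t0 → c < f r := by
    intro r hr1 hr2
    by_contra h
    push_neg at h
    have : r ∈ S := ⟨⟨le_trans hsIcc.1 hr1.le, hr2⟩, h⟩
    exact absurd (le_csSup hSbdd this) (not_le.mpr hr1)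
  -- continuity at s: find δ so that f < c + η near s
  have hcs : ContinuousAt f s := (hd s (hsub hsIcc)).continuousAt
  obtain ⟨δ, hδ, hδf⟩ := Metric.continuousAt_iff.mp hcs η hη
  set t1 := min t0 (s + δ / 2) with ht1
  have hst1 : s < t1 := lt_min hst0 (by linarith)
  have ht1t0 : t1 ≤ t0 := min_le_left _ _
  have hsmall : ∀ r ∈ Set.Icc s t1, f r < c + η := by
    intro r hr
    have h1 : dist r s < δ := by
      rw [Real.dist_eq, abs_lt]
      constructor
      · linarith [hr.1]
      · have := hr.2
        have : r ≤ s + δ / 2 := le_trans this (min_le_right _ _)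
        linarith
    have := hδf h1
    rw [Real.dist_eq] at this
    have := abs_lt.mp this
    linarith [this.2, hfs]
  have hIccsub : Set.Icc s t1 ⊆ Set.Icc (0 : ℝ) T :=
    Set.Icc_subset_Icc hsIcc.1 (le_trans ht1t0 ht0.2)
  have hanti : AntitoneOn f (Set.Icc s t1) := by
    apply antitoneOn_of_deriv_nonpos (convex_Icc s t1)
      (hcontOn.mono hIccsub)
    · intro x hx
      rw [interior_Icc] at hx
      exact (hd x (hIccsub ⟨hx.1.le, hx.2.le⟩)).differentiableAt.differentiableWithinAt
    · intro x hx
      rw [interior_Icc] at hx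
      have hxmem := hIccsub ⟨hx.1.le, hx.2.le⟩
      rw [(hd x hxmem).deriv]
      exact hneg x hxmem (hgt x hx.1 (le_trans hx.2.le ht1t0))
        (hsmall x ⟨hx.1.le, hx.2.le⟩)
  have h1 : f t1 ≤ f s := hanti ⟨le_rfl, hst1.le⟩ ⟨hst1.le, le_rfl⟩ hst1.le
  exact absurd (le_trans h1 hfs) (not_le.mpr (hgt t1 hst1 ht1t0))

/-- Positive invariance of the unit cube for the Hill-type system. -/
theorem cube_positively_invariant (n : ℕ)
    (JA JI : Fin n → ℝ) (hJA : ∀ i, 0 < JA i) (hJI : ∀ i, 0 < JI i)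
    (A I : (Fin n → ℝ) → Fin n → ℝ)
    (KA KI : Fin n → NNReal)
    (hA : ∀ i, LipschitzWith (KA i) (fun u => A u i))
    (hI : ∀ i, LipschitzWith (KI i) (fun u => I u i))
    (hAnn : ∀ u i, 0 ≤ A u i) (hInn : ∀ u i, 0 ≤ I u i)
    (T : ℝ) (hT : 0 ≤ T) (u : ℝ → Fin n → ℝ)
    (hode : ∀ t ∈ Set.Icc (0 : ℝ) T, ∀ i,
      HasDerivAt (fun s => u s i)
        (A (u t) i * (1 - u t i) / (JA i + 1 - u t i) -
          I (u t) i * (u t i / (JI i + u t i))) t)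
    (h0 : u 0 ∈ Set.Icc (0 : Fin n → ℝ) 1) :
    ∀ t ∈ Set.Icc (0 : ℝ) T, u t ∈ Set.Icc (0 : Fin n → ℝ) 1 := by
  intro t ht
  constructor
  · -- lower bound: 0 ≤ u t
    intro i
    have key : ∀ r ∈ Set.Icc (0 : ℝ) T, -(u r i) ≤ 0 := by
      apply no_escape (f' := fun r => -(A (u r) i * (1 - u r i) / (JA i + 1 - u r i) -
          I (u r) i * (u r i / (JI i + u r i)))) (hJI i)
      · intro r hr
        exact (hode r hr i).neg
      · simpa using h0.1 i
      · intro r hr h1 h2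
        simp only [zero_add] at h2
        have hx1 : u r i < 0 := by linarith
        have hx2 : -(JI i) < u r i := by linarith
        have hterm1 : 0 ≤ A (u r) i * (1 - u r i) / (JA i + 1 - u r i) :=
          div_nonneg (mul_nonneg (hAnn _ i) (by linarith)) (by linarith [hJA i])
        have hterm2 : I (u r) i * (u r i / (JI i + u r i)) ≤ 0 :=
          mul_nonpos_of_nonneg_of_nonpos (hInn _ i)
            (div_nonpos_of_nonpos_of_nonneg hx1.le (by linarith))
        linarith
    simpa using key t ht
  · -- upper bound: u t ≤ 1
    intro i
    have key : ∀ r ∈ Set.Icc (0 : ℝ) T, u r i ≤ 1 := by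
      apply no_escape (f' := fun r => A (u r) i * (1 - u r i) / (JA i + 1 - u r i) -
          I (u r) i * (u r i / (JI i + u r i))) (hJA i)
      · intro r hr
        exact hode r hr i
      · exact h0.2 i
      · intro r hr h1 h2
        have hterm1 : A (u r) i * (1 - u r i) / (JA i + 1 - u r i) ≤ 0 :=
          div_nonpos_of_nonpos_of_nonneg
            (mul_nonpos_of_nonneg_of_nonpos (hAnn _ i) (by linarith)) (by linarith)
        have hterm2 : 0 ≤ I (u r) i * (u r i / (JI i + u r i)) :=
          mul_nonneg (hInn _ i) (div_nonneg (by linarith) (by linarith [hJI i]))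
        linarith
    exact key t ht
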